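/- The function Q(x) = e^{ψ(x+1)} − x is strictly decreasing on the interval (−1, ∞). -/

import Mathlib

/-!
Since `Q' x = ψ' (x + 1) e^{ψ (x + 1)} - 1`, it suffices that `ψ' y e^{ψ y} < 1` for `y > 0`.

Convexity of `log ∘ Γ` squeezes `ψ y` between `log (y - 1)` and `log y`. Together with
`ψ (y + 1) = ψ y + 1 / y` this yields `ψ x = ψ 1 + ∑ (1 / (m + 1) - 1 / (x + m))`, hence
`ψ' x = ∑ 1 / (x + m) ^ 2` and `ψ' y = ψ' (y + 1) + 1 / y ^ 2`.

The bounds `ψ (a + 1/2) ≤ log a + 1 / (24 a²)` and `ψ' (a + 1/2) ≤ 1 / a - 1 / (12 (a + 1/2)³)`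
follow from the recurrences: the difference between the two sides moves monotonically under
`a ↦ a + 1` and tends to `0`. They are sharp enough to give `ψ' y e^{ψ y} < 1` for `y ≥ 3`,
and the recurrences carry this inequality from `y + 1` down to `y`, because
`e^{ψ (y + 1)} < y² (e^{1/y} - 1)`.
-/

open Real Filter Set

/-- The digamma (psi) function: the logarithmic derivative of the gamma function. -/
noncomputable def psi (x : ℝ) : ℝ := deriv (fun t : ℝ => Real.log (Real.Gamma t)) x

open Topology

lemma differentiableAt_log_Gamma {x : ℝ} (hx : 0 < x) :
    DifferentiableAt ℝ (fun t => log (Gamma t)) x :=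
  (differentiableAt_Gamma fun m => ((neg_nonpos.mpr m.cast_nonneg).trans_lt hx).ne').log
    (Gamma_pos_of_pos hx).ne'

lemma log_Gamma_add_one {x : ℝ} (hx : 0 < x) : log (Gamma (x + 1)) = log (Gamma x) + log x := by
  rw [Gamma_add_one hx.ne', log_mul hx.ne' (Gamma_pos_of_pos hx).ne', add_comm]

lemma psi_add_one {x : ℝ} (hx : 0 < x) : psi (x + 1) = psi x + x⁻¹ := by
  unfold psi
  rw [← deriv_comp_add_const, ← deriv_log,
    ← deriv_add (differentiableAt_log_Gamma hx) (differentiableAt_log hx.ne')]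
  apply EventuallyEq.deriv_eq
  filter_upwards [eventually_gt_nhds hx] with t ht using log_Gamma_add_one ht

lemma psi_add_nat {x : ℝ} (hx : 0 < x) (n : ℕ) :
    psi (x + n) = psi x + ∑ m ∈ Finset.range n, (x + m)⁻¹ := by
  induction n with
  | zero => simp
  | succ n ih =>
    rw [Nat.cast_succ, ← add_assoc, psi_add_one (by positivity), ih, Finset.sum_range_succ,
      add_assoc]

lemma slope_log_Gamma {x : ℝ} (hx : 0 < x) : slope (log ∘ Gamma) x (x + 1) = log x := by
  rw [slope_def_field, add_sub_cancel_left, div_one, Function.comp_apply, Function.comp_apply,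
    log_Gamma_add_one hx, add_sub_cancel_left]

lemma psi_le_log {x : ℝ} (hx : 0 < x) : psi x ≤ log x :=
  (slope_log_Gamma hx).subst (convexOn_log_Gamma.deriv_le_slope hx (mem_Ioi.mpr (by linarith))
    (by linarith) (differentiableAt_log_Gamma hx))

lemma log_le_psi_add_one {x : ℝ} (hx : 0 < x) : log x ≤ psi (x + 1) :=
  (slope_log_Gamma hx).symm.trans_le <| convexOn_log_Gamma.slope_le_deriv (y := x + 1) hx
    (mem_Ioi.mpr (by linarith)) (by linarith) (differentiableAt_log_Gamma (by linarith))

lemma tendsto_psi_sub_log : Tendsto (fun x => psi x - log x) atTop (𝓝 0) := by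
  have hlower : Tendsto (fun x => log (x - 1) - log x) atTop (𝓝 0) := by
    simpa [sub_eq_add_neg] using ((tendsto_log_comp_add_sub_log 1).comp
      (tendsto_atTop_add_const_right _ (-1) tendsto_id)).neg
  refine tendsto_of_tendsto_of_tendsto_of_le_of_le' hlower tendsto_const_nhds ?_ ?_
  · filter_upwards [eventually_gt_atTop 1] with x hx
    have := log_le_psi_add_one (x := x - 1) (by linarith)
    rw [sub_add_cancel] at this
    linarith
  · filter_upwards [eventually_gt_atTop 0] with x hx
    exact sub_nonpos.mpr (psi_le_log hx)

lemma tendsto_psi_add_sub_log (c : ℝ) :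
    Tendsto (fun x => psi (x + c) - log x) atTop (𝓝 0) := by
  simpa using (tendsto_psi_sub_log.comp (tendsto_atTop_add_const_right _ c tendsto_id)).add
    (tendsto_log_comp_add_sub_log c)

lemma summable_inv_add_nat_sq {a : ℝ} (ha : 0 < a) : Summable fun m : ℕ => ((a + m) ^ 2)⁻¹ :=
  ((summable_one_div_nat_add_rpow a 2).mpr one_lt_two).congr fun m => by
    rw [abs_of_pos (by positivity), rpow_two, one_div, add_comm]

lemma hasDerivAt_inv_sub_inv_add_nat (m : ℕ) {t : ℝ} (ht : 0 < t) :
    HasDerivAt (fun t : ℝ => ((m : ℝ) + 1)⁻¹ - (t + m)⁻¹) ((t + m) ^ 2)⁻¹ t := by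
  simpa [neg_div, one_div] using
    (((hasDerivAt_id t).add_const (m : ℝ)).fun_inv (by positivity)).const_sub ((m : ℝ) + 1)⁻¹

lemma norm_inv_add_nat_sq_le {a t : ℝ} (ha : 0 < a) (hat : a ≤ t) (m : ℕ) :
    ‖((t + m) ^ 2)⁻¹‖ ≤ ((a + m) ^ 2)⁻¹ := by
  rw [Real.norm_of_nonneg (by positivity)]
  gcongr

noncomputable def trigamma (x : ℝ) : ℝ := ∑' m : ℕ, ((x + m) ^ 2)⁻¹

lemma summable_inv_sub_inv_add_nat {x : ℝ} (hx : 0 < x) :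
    Summable fun m : ℕ => ((m : ℝ) + 1)⁻¹ - (x + m)⁻¹ := by
  have ha : 0 < min x 1 / 2 := by positivity
  refine summable_of_summable_hasDerivAt_of_isPreconnected (summable_inv_add_nat_sq ha)
    isOpen_Ioi isPreconnected_Ioi (fun m t ht => hasDerivAt_inv_sub_inv_add_nat m (ha.trans ht))
    (fun m t ht => norm_inv_add_nat_sq_le ha ht.le m) (y₀ := 1) ?_ ?_ ?_
  · exact mem_Ioi.mpr (by linarith [min_le_right x 1])
  · exact summable_zero.congr fun m => by rw [add_comm, sub_self]
  · exact mem_Ioi.mpr (by linarith [min_le_left x 1])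

lemma hasSum_inv_sub_inv_add_nat {x : ℝ} (hx : 0 < x) :
    HasSum (fun m : ℕ => ((m : ℝ) + 1)⁻¹ - (x + m)⁻¹) (psi x - psi 1) := by
  refine (summable_inv_sub_inv_add_nat hx).hasSum_iff_tendsto_nat.mpr ?_
  have hlim := tendsto_const_nhds (x := psi x - psi 1) |>.add <|
    ((tendsto_psi_add_sub_log 1).sub (tendsto_psi_add_sub_log x)).comp tendsto_natCast_atTop_atTop
  rw [sub_zero, add_zero] at hlim
  refine hlim.congr fun n => ?_
  have h1 := psi_add_nat one_pos n
  have hx' := psi_add_nat hx n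
  simp only [Function.comp_apply, Finset.sum_sub_distrib]
  simp only [add_comm (1 : ℝ), add_comm x] at h1 hx' ⊢
  linarith

lemma psi_eq_tsum {x : ℝ} (hx : 0 < x) :
    psi x = psi 1 + ∑' m : ℕ, (((m : ℝ) + 1)⁻¹ - (x + m)⁻¹) := by
  rw [(hasSum_inv_sub_inv_add_nat hx).tsum_eq, add_sub_cancel]

lemma hasDerivAt_psi {x : ℝ} (hx : 0 < x) : HasDerivAt psi (trigamma x) x := by
  have ha : 0 < x / 2 := by positivity
  have h := hasDerivAt_tsum_of_isPreconnected (summable_inv_add_nat_sq ha)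
    isOpen_Ioi isPreconnected_Ioi (fun m t ht => hasDerivAt_inv_sub_inv_add_nat m (ha.trans ht))
    (fun m t ht => norm_inv_add_nat_sq_le ha ht.le m) (half_lt_self hx)
    (summable_inv_sub_inv_add_nat hx) (half_lt_self hx)
  refine (h.const_add (psi 1)).congr_of_eventuallyEq ?_
  filter_upwards [eventually_gt_nhds hx] with t ht using psi_eq_tsum ht

lemma trigamma_eq_inv_sq_add {x : ℝ} (hx : 0 < x) :
    trigamma x = (x ^ 2)⁻¹ + trigamma (x + 1) := by
  rw [trigamma, trigamma, (summable_inv_add_nat_sq hx).tsum_eq_zero_add]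
  simp [add_assoc, add_comm (1 : ℝ)]

lemma tendsto_trigamma_atTop : Tendsto trigamma atTop (𝓝 0) := by
  have h := tendsto_tsum_of_dominated_convergence (𝓕 := atTop) (g := fun _ : ℕ => (0 : ℝ))
    (summable_inv_add_nat_sq one_pos) (f := fun (x : ℝ) (m : ℕ) => ((x + m) ^ 2)⁻¹)
    (fun m => tendsto_inv_atTop_zero.comp <| (tendsto_pow_atTop two_ne_zero).comp <|
      tendsto_atTop_add_const_right _ _ tendsto_id)
    (by filter_upwards [eventually_ge_atTop 1] with x hx m using norm_inv_add_nat_sq_le one_pos hx m)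
  rwa [tsum_zero] at h

lemma nonpos_of_le_add_one_of_tendsto {φ : ℝ → ℝ} {c : ℝ}
    (hstep : ∀ y, c < y → φ y ≤ φ (y + 1)) (hlim : Tendsto φ atTop (𝓝 0)) {x : ℝ} (hx : c < x) :
    φ x ≤ 0 := by
  have h (n : ℕ) : φ x ≤ φ (x + n) := by
    induction n with
    | zero => simp
    | succ n ih =>
      rw [Nat.cast_succ, ← add_assoc]
      exact ih.trans (hstep _ (by linarith [n.cast_nonneg (α := ℝ)]))
  exact ge_of_tendsto' (hlim.comp (tendsto_atTop_add_const_left _ x tendsto_natCast_atTop_atTop)) h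

/-- Beyond its first term, the series `log (1 + a⁻¹) = 2 artanh u`, `u = 1 / (2a + 1)`, is
dominated by the geometric series `∑ (2/3) u ^ (2k + 3)`. -/

lemma log_one_add_inv_le {a : ℝ} (ha : 0 < a) :
    log (1 + a⁻¹) ≤ (a + 1 / 2)⁻¹ + ((24 * a ^ 2)⁻¹ - (24 * (a + 1) ^ 2)⁻¹) := by
  have htail := (hasSum_nat_add_iff' 1).mpr (hasSum_log_one_add_inv ha)
  set u := 1 / (2 * a + 1) with hu
  have hu0 : 0 ≤ u := by positivity
  have hu1 : u ^ 2 < 1 := by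
    rw [sq_lt_one_iff₀ hu0, hu, div_lt_one (by positivity)]; linarith
  have hgeom := (hasSum_geometric_of_lt_one (sq_nonneg u) hu1).mul_left (2 / 3 * u ^ 3)
  have hle := hasSum_le (fun k => ?_) htail hgeom
  · simp only [Finset.range_one, Finset.sum_singleton, CharP.cast_eq_zero, mul_zero, zero_add,
      div_one, mul_one, pow_one] at hle
    have h1 : (1 - u ^ 2)⁻¹ = (2 * a + 1) ^ 2 / (4 * a * (a + 1)) := by
      rw [hu, inv_eq_iff_eq_inv, inv_div]
      field_simp
      ring
    have hsum : 2 * u + 2 / 3 * u ^ 3 * (1 - u ^ 2)⁻¹ + (24 * a ^ 2 * (a + 1) ^ 2 * (2 * a + 1))⁻¹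
        = (a + 1 / 2)⁻¹ + ((24 * a ^ 2)⁻¹ - (24 * (a + 1) ^ 2)⁻¹) := by
      rw [h1, hu]
      field_simp
      ring
    have : 0 ≤ (24 * a ^ 2 * (a + 1) ^ 2 * (2 * a + 1))⁻¹ := by positivity
    linarith
  · rw [show u ^ (2 * (k + 1) + 1) = u ^ 3 * (u ^ 2) ^ k by ring, ← mul_assoc]
    gcongr
    rw [mul_one_div, div_le_div_iff₀ (by positivity) (by positivity)]
    push_cast
    linarith

lemma psi_add_half_le {a : ℝ} (ha : 0 < a) : psi (a + 1 / 2) ≤ log a + (24 * a ^ 2)⁻¹ := by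
  suffices h : psi (a + 1 / 2) - (log a + (24 * a ^ 2)⁻¹) ≤ 0 by linarith
  refine nonpos_of_le_add_one_of_tendsto (φ := fun a => psi (a + 1 / 2) - (log a + (24 * a ^ 2)⁻¹))
    (fun b hb => ?_) ?_ ha
  · have hlog : log (b + 1) = log b + log (1 + b⁻¹) := by
      rw [← log_mul hb.ne' (by positivity), mul_add, mul_inv_cancel₀ hb.ne', mul_one]
    have := log_one_add_inv_le hb
    rw [show b + 1 + 1 / 2 = b + 1 / 2 + 1 by ring, psi_add_one (by linarith), hlog]
    linarith
  · have h24 : Tendsto (fun a : ℝ => (24 * a ^ 2)⁻¹) atTop (𝓝 0) :=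
      tendsto_inv_atTop_zero.comp ((tendsto_pow_atTop two_ne_zero).const_mul_atTop (by norm_num))
    simpa [sub_add_eq_sub_sub] using (tendsto_psi_add_sub_log (1 / 2)).sub h24

lemma inv_add_half_sq_le_sub {a : ℝ} (ha : 0 < a) :
    ((a + 1 / 2) ^ 2)⁻¹ ≤
      (a⁻¹ - (12 * (a + 1 / 2) ^ 3)⁻¹) - ((a + 1)⁻¹ - (12 * (a + 1 + 1 / 2) ^ 3)⁻¹) := by
  rw [← sub_nonneg]
  have e : (a⁻¹ - (12 * (a + 1 / 2) ^ 3)⁻¹) - ((a + 1)⁻¹ - (12 * (a + 1 + 1 / 2) ^ 3)⁻¹)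
        - ((a + 1 / 2) ^ 2)⁻¹
      = (24 * (a + 1 / 2) ^ 3 + 35 * (a + 1 / 2) ^ 2 + 15 * (a + 1 / 2) + 1) /
        (48 * (a + 1 / 2) ^ 3 * (a + 3 / 2) ^ 3 * a * (a + 1)) := by
    field_simp
    ring
  rw [e]
  positivity

lemma trigamma_add_half_le {a : ℝ} (ha : 0 < a) :
    trigamma (a + 1 / 2) ≤ a⁻¹ - (12 * (a + 1 / 2) ^ 3)⁻¹ := by
  suffices h : trigamma (a + 1 / 2) - (a⁻¹ - (12 * (a + 1 / 2) ^ 3)⁻¹) ≤ 0 by linarith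
  refine nonpos_of_le_add_one_of_tendsto
    (φ := fun a => trigamma (a + 1 / 2) - (a⁻¹ - (12 * (a + 1 / 2) ^ 3)⁻¹)) (fun b hb => ?_) ?_ ha
  · have := inv_add_half_sq_le_sub hb
    rw [show b + 1 + 1 / 2 = b + 1 / 2 + 1 by ring] at this ⊢
    rw [trigamma_eq_inv_sq_add (by linarith)]
    linarith
  · have hshift : Tendsto (fun a : ℝ => a + 1 / 2) atTop atTop :=
      tendsto_atTop_add_const_right _ _ tendsto_id
    have h12 : Tendsto (fun a : ℝ => (12 * (a + 1 / 2) ^ 3)⁻¹) atTop (𝓝 0) :=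
      tendsto_inv_atTop_zero.comp <|
        ((tendsto_pow_atTop three_ne_zero).comp hshift).const_mul_atTop (by norm_num)
    simpa using (tendsto_trigamma_atTop.comp hshift).sub (tendsto_inv_atTop_zero.sub h12)

lemma trigamma_mul_exp_psi_lt_one_of_three_le {y : ℝ} (hy : 3 ≤ y) :
    trigamma y * exp (psi y) < 1 := by
  obtain ⟨a, rfl⟩ : ∃ a, y = a + 1 / 2 := ⟨y - 1 / 2, by ring⟩
  have ha0 : 0 < a := by linarith
  set w := (12 * (a + 1 / 2) ^ 3)⁻¹
  set s := (24 * a ^ 2)⁻¹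
  have haw : a * w < 1 := by
    rw [← div_eq_mul_inv, div_lt_one (by positivity)]
    nlinarith [pow_pos ha0 3, pow_pos ha0 2]
  have hsw : s < a * w := by
    rw [← div_eq_mul_inv, inv_lt_comm₀ (by positivity) (by positivity), inv_div,
      div_lt_iff₀ ha0]
    nlinarith
  have hE : exp (psi (a + 1 / 2)) ≤ a * exp s :=
    calc exp (psi (a + 1 / 2)) ≤ exp (log a + s) := exp_le_exp.mpr (psi_add_half_le ha0)
      _ = a * exp s := by rw [exp_add, exp_log ha0]
  calc trigamma (a + 1 / 2) * exp (psi (a + 1 / 2))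
      ≤ (a⁻¹ - w) * (a * exp s) :=
        mul_le_mul (trigamma_add_half_le ha0) hE (exp_pos _).le
          (by simpa [mul_sub, ← mul_assoc, ha0.ne'] using
            mul_nonneg (inv_nonneg.mpr ha0.le) (sub_nonneg.mpr haw.le))
    _ = (1 - a * w) * exp s := by field_simp
    _ ≤ exp (-(a * w)) * exp s := by gcongr; linarith [add_one_le_exp (-(a * w))]
    _ = exp (s - a * w) := by rw [← exp_add, neg_add_eq_sub]
    _ < 1 := exp_lt_one_iff.mpr (by linarith)

lemma exp_psi_add_one_lt {y : ℝ} (hy : 0 < y) : exp (psi (y + 1)) < y ^ 2 * (exp y⁻¹ - 1) := by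
  set s := (24 * (y + 1 / 2) ^ 2)⁻¹
  have hs0 : 0 ≤ s := by positivity
  have hs1 : s < 1 := by
    rw [inv_lt_one_iff₀]; right; nlinarith
  have hupper : exp (psi (y + 1)) ≤ (y + 1 / 2) / (1 - s) :=
    calc exp (psi (y + 1)) ≤ exp (log (y + 1 / 2) + s) := by
          rw [show y + 1 = y + 1 / 2 + 1 / 2 by ring]
          exact exp_le_exp.mpr (psi_add_half_le (by positivity))
      _ = (y + 1 / 2) * exp s := by rw [exp_add, exp_log (by positivity)]
      _ ≤ (y + 1 / 2) * (1 / (1 - s)) := by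
          gcongr
          exact exp_bound_div_one_sub_of_interval hs0 hs1
      _ = (y + 1 / 2) / (1 - s) := mul_one_div _ _
  have hlower : y + 1 / 2 + (6 * y)⁻¹ ≤ y ^ 2 * (exp y⁻¹ - 1) := by
    have hexp : 1 + y⁻¹ + (y ^ 2)⁻¹ / 2 + (y ^ 3)⁻¹ / 6 ≤ exp y⁻¹ := by
      simpa [Finset.sum_range_succ, Nat.factorial] using
        sum_le_exp_of_nonneg (inv_nonneg.mpr hy.le) 4
    calc y + 1 / 2 + (6 * y)⁻¹ = y ^ 2 * (y⁻¹ + (y ^ 2)⁻¹ / 2 + (y ^ 3)⁻¹ / 6) := by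
          field_simp
      _ ≤ y ^ 2 * (exp y⁻¹ - 1) := by gcongr; linarith
  refine hupper.trans_lt (lt_of_lt_of_le ?_ hlower)
  rw [div_lt_iff₀ (by linarith), ← sub_pos]
  have e : (y + 1 / 2 + (6 * y)⁻¹) * (1 - s) - (y + 1 / 2)
      = (18 * y ^ 2 + 21 * y + 5) / (144 * y * (y + 1 / 2) ^ 2) := by
    simp only [s]
    field_simp
    ring
  rw [e]
  positivity

lemma trigamma_mul_exp_psi_lt_one_of_add_one {y : ℝ} (hy : 0 < y)
    (h : trigamma (y + 1) * exp (psi (y + 1)) < 1) : trigamma y * exp (psi y) < 1 := by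
  have hpsi : psi y = psi (y + 1) - y⁻¹ := by rw [psi_add_one hy, add_sub_cancel_right]
  have hE := exp_psi_add_one_lt hy
  calc trigamma y * exp (psi y)
      = ((y ^ 2)⁻¹ * exp (psi (y + 1)) + trigamma (y + 1) * exp (psi (y + 1))) * exp (-y⁻¹) := by
        rw [trigamma_eq_inv_sq_add hy, hpsi, sub_eq_add_neg, exp_add]
        ring
    _ < ((exp y⁻¹ - 1) + 1) * exp (-y⁻¹) := by
        gcongr
        rw [inv_mul_lt_iff₀ (by positivity)]
        exact hE
    _ = 1 := by rw [sub_add_cancel, ← exp_add, add_neg_cancel, exp_zero]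

lemma trigamma_mul_exp_psi_lt_one {x : ℝ} (hx : 0 < x) : trigamma x * exp (psi x) < 1 := by
  have h3 := trigamma_mul_exp_psi_lt_one_of_three_le (y := x + 3) (by linarith)
  refine trigamma_mul_exp_psi_lt_one_of_add_one hx ?_
  refine trigamma_mul_exp_psi_lt_one_of_add_one (by positivity) ?_
  refine trigamma_mul_exp_psi_lt_one_of_add_one (by positivity) ?_
  rwa [show x + 1 + 1 + 1 = x + 3 by ring]

theorem Q_strictAntiOn :
    StrictAntiOn (fun x : ℝ => Real.exp (psi (x + 1)) - x) (Set.Ioi (-1)) := by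
  have hQ (x : ℝ) (hx : x ∈ Ioi (-1 : ℝ)) : HasDerivAt (fun x : ℝ => exp (psi (x + 1)) - x)
      (trigamma (x + 1) * exp (psi (x + 1)) - 1) x := by
    have := ((hasDerivAt_psi (by linarith [mem_Ioi.mp hx])).comp_add_const x 1).exp.fun_sub
      (hasDerivAt_id' x)
    simpa [mul_comm] using this
  refine strictAntiOn_of_hasDerivWithinAt_neg (convex_Ioi _)
    (f' := fun x => trigamma (x + 1) * exp (psi (x + 1)) - 1)
    (fun x hx => (hQ x hx).continuousAt.continuousWithinAt) (fun x hx => ?_) (fun x hx => ?_)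
  · rw [interior_Ioi] at hx ⊢
    exact (hQ x hx).hasDerivWithinAt
  · rw [interior_Ioi] at hx
    linarith [trigamma_mul_exp_psi_lt_one (x := x + 1) (by linarith [mem_Ioi.mp hx])]
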